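/- arXiv:2002.11941 — 2 statements merged into one kernel-verified Lean document; each statement's English description precedes it below -/
import Mathlib

section
/- Let K be a number field, η ∈ O_K^× a unit, n ≥ 1 an integer, and π a prime ideal of O_K such that the π-adic valuation of η^n − 1 equals exactly 1 (i.e., π divides η^n − 1 but π² does not). Then π is a non-Wieferich prime with respect to η, i.e., η^(N(π)−1) ≡ 1 (mod π) and η^(N(π)−1) ≢ 1 (mod π²). -/
open NumberField

/-- A prime ideal `π` of `𝓞 K` is a non-Wieferich prime with respect to a unit `η` if
`η^(N(π)-1) ≡ 1 (mod π)` and `η^(N(π)-1) ≢ 1 (mod π²)`. -/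
def IsNonWieferich {K : Type*} [Field K] [NumberField K] (η : (𝓞 K)ˣ) (π : Ideal (𝓞 K)) : Prop :=
  (η : 𝓞 K) ^ (Ideal.absNorm π - 1) - 1 ∈ π ∧
  (η : 𝓞 K) ^ (Ideal.absNorm π - 1) - 1 ∉ π ^ 2

/-!
Write `q = N(π)` and `x = ηⁿ`, so that `x ≡ 1 (mod π)` and `x ≢ 1 (mod π²)`. The first condition
is Fermat's little theorem in the field `𝓞 K ⧸ π` of `q` elements. For the second, if `x ≡ 1 (mod π)`
then `x^m - 1 ≡ m (x - 1) (mod π²)`, and `m = q - 1 ≡ -1 (mod π)`, so `x^(q-1) - 1 ≡ -(x - 1)` is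
not `0` modulo `π²`. Since `η^(q-1) - 1` divides `(η^(q-1))ⁿ - 1 = x^(q-1) - 1`, it is not `0`
modulo `π²` either.
-/

namespace Ideal

variable {R : Type*} [CommRing R]

theorem pow_card_quotient_sub_one_sub_one_mem (I : Ideal R) [I.IsMaximal] (u : Rˣ) :
    (u : R) ^ (Nat.card (R ⧸ I) - 1) - 1 ∈ I := by
  let _ := Quotient.field I
  rw [← Quotient.eq_zero_iff_mem, map_sub, map_one, map_pow, sub_eq_zero, ← Nat.card_units]
  exact congrArg Units.val (pow_card_eq_one' (x := Units.map (Quotient.mk I : R →* R ⧸ I) u))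

theorem pow_sub_one_sub_mul_sub_one_mem_sq {I : Ideal R} {x : R} (hx : x - 1 ∈ I) (m : ℕ) :
    x ^ m - 1 - m * (x - 1) ∈ I ^ 2 := by
  have hsum : ∑ i ∈ Finset.range m, (x ^ i - 1) ∈ I :=
    I.sum_mem fun i _ => I.mem_of_dvd (sub_one_dvd_pow_sub_one x i) hx
  have hfactor : x ^ m - 1 - m * (x - 1) = (x - 1) * ∑ i ∈ Finset.range m, (x ^ i - 1) := by
    rw [Finset.sum_sub_distrib, mul_sub (x - 1), mul_comm (x - 1), geom_sum_mul]
    simp only [Finset.sum_const, Finset.card_range, nsmul_eq_mul, mul_one]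
    ring
  rw [hfactor, sq]
  exact mul_mem_mul hx hsum

theorem pow_sub_one_mem_sq_iff {I : Ideal R} {x : R} (hx : x - 1 ∈ I) {m : ℕ}
    (hm : (m + 1 : R) ∈ I) : x ^ m - 1 ∈ I ^ 2 ↔ x - 1 ∈ I ^ 2 := by
  have hsum : x ^ m - 1 + (x - 1) ∈ I ^ 2 := by
    have hlin : (m + 1 : R) * (x - 1) ∈ I ^ 2 := by
      rw [sq]
      exact mul_mem_mul hm hx
    convert add_mem (pow_sub_one_sub_mul_sub_one_mem_sq hx m) hlin using 1
    ring
  exact ⟨fun h => by simpa using sub_mem hsum h, fun h => by simpa using sub_mem hsum h⟩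

end Ideal

theorem isNonWieferich_of_val_one_general (K : Type*) [Field K] [NumberField K] (η : (𝓞 K)ˣ)
    (n : ℕ) (π : Ideal (𝓞 K)) (hπp : π.IsPrime) (hπb : π ≠ ⊥)
    (h1 : (η : 𝓞 K) ^ n - 1 ∈ π) (h2 : (η : 𝓞 K) ^ n - 1 ∉ π ^ 2) :
    IsNonWieferich η π := by
  have : π.IsMaximal := hπp.isMaximal hπb
  set q := Ideal.absNorm π
  have hq : ((q - 1 : ℕ) + 1 : 𝓞 K) ∈ π := by
    have hq0 : q ≠ 0 := Ideal.absNorm_eq_zero_iff.not.mpr hπb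
    rw [← Nat.cast_add_one, Nat.sub_add_cancel (Nat.one_le_iff_ne_zero.mpr hq0)]
    exact π.absNorm_mem
  refine ⟨?_, fun hmem => h2 ?_⟩
  · simpa [q, Ideal.absNorm_apply, Submodule.cardQuot_apply] using
      π.pow_card_quotient_sub_one_sub_one_mem η
  · rw [← Ideal.pow_sub_one_mem_sq_iff h1 hq, ← pow_mul, mul_comm, pow_mul]
    exact (π ^ 2).mem_of_dvd (sub_one_dvd_pow_sub_one _ n) hmem

/-- Let `K` be a number field, `η` a unit of `𝓞 K`, `n ≥ 1`, and `π` a prime ideal of `𝓞 K`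
such that `v_π(η^n − 1) = 1`, that is, `π` divides `η^n − 1` but `π²` does not.  Then `π` is a
non-Wieferich prime with respect to `η`. -/
theorem isNonWieferich_of_val_one (K : Type*) [Field K] [NumberField K] (η : (𝓞 K)ˣ)
    (n : ℕ) (hn : 1 ≤ n) (π : Ideal (𝓞 K)) (hπp : π.IsPrime) (hπb : π ≠ ⊥)
    (h1 : (η : 𝓞 K) ^ n - 1 ∈ π) (h2 : (η : 𝓞 K) ^ n - 1 ∉ π ^ 2) :
    IsNonWieferich η π :=
  isNonWieferich_of_val_one_general K η n π hπp hπb h1 h2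
end

section
/- Let K be a number field of degree d = [K:ℚ] and let η ∈ O_K^× be a unit which is not a root of unity. For n ≥ 1, let U'_n denote the squarefree part of the ideal (Φ_n(η)) of O_K, i.e., the product of those prime ideals π with v_π(Φ_n(η)) = 1, where Φ_n is the n-th cyclotomic polynomial. Then for every x > 0, the number of prime ideals π of O_K with N(π) ≤ x that are non-Wieferich primes with respect to η is at least the number of integers n ≥ 1 such that |N_{K/ℚ}(Φ_n(η))| ≤ x and N(U'_n) > n^d. -/
open NumberField UniqueFactorizationMonoid

open scoped Classical in
/-- The squarefree part of a nonzero ideal `I` of `𝓞 K`: the product of those prime ideals `π`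
appearing with multiplicity exactly `1` in the prime factorization of `I`. -/
noncomputable def squarefreePart {K : Type*} [Field K] [NumberField K] (I : Ideal (𝓞 K)) :
    Ideal (𝓞 K) :=
  ∏ π ∈ (normalizedFactors I).toFinset.filter (fun π => (normalizedFactors I).count π = 1), π

/-!
Fix `n` counted on the left. Since `N(U'ₙ) > n ^ d = N((n))`, the squarefree part `U'ₙ` does not
divide `(n)`, so some prime `π` divides `Φₙ(η)` exactly once and does not contain `n`. Modulo
such a `π`, `η` has multiplicative order exactly `n`, so `n ∣ N(π) - 1` and
`η ^ (N(π) - 1) - 1 = Φₙ(η) · ∏_{d ∣ n, d < n} Φ_d(η) · ∑_{i < k} η ^ (n i)` with `n k = N(π) - 1`.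
The last two factors are units modulo `π` (the order of `η` is not a proper divisor of `n`, and the
sum is `≡ k ≢ 0`), so `π` is non-Wieferich. Its norm divides `N(Φₙ(η))`, and `n` is recovered from
`π` as the order of `η` modulo `π`, so distinct `n` give distinct primes.
-/

open Polynomial

theorem Polynomial.pow_sub_one_eq_cyclotomic_eval_mul_prod {R : Type*} [CommRing R] {n : ℕ}
    (hn : 0 < n) (a : R) :
    a ^ n - 1 = (cyclotomic n R).eval a * ∏ d ∈ n.properDivisors, (cyclotomic d R).eval a := by
  have h := congrArg (eval a) (prod_cyclotomic_eq_X_pow_sub_one hn R)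
  rwa [eval_prod, ← Nat.cons_self_properDivisors hn.ne', Finset.prod_cons, eval_sub, eval_pow,
    eval_X, eval_one, eq_comm] at h

namespace Ideal

variable {R : Type*} [CommRing R] {P : Ideal R}

theorem geom_sum_notMem_of_sub_one_mem {b : R} (hb : b - 1 ∈ P) {k : ℕ} (hk : (k : R) ∉ P) :
    ∑ i ∈ Finset.range k, b ^ i ∉ P := by
  rw [← Quotient.eq_zero_iff_mem, map_sub, map_one, sub_eq_zero] at hb
  rw [← Quotient.eq_zero_iff_mem, map_natCast] at hk
  rw [← Quotient.eq_zero_iff_mem, map_sum]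
  simpa only [map_pow, hb, one_pow, Finset.sum_const, Finset.card_range, nsmul_eq_mul,
    mul_one] using hk

variable [P.IsMaximal] {n : ℕ} {a : R}

theorem mul_notMem_pow {x u : R} {m : ℕ} (hm : m ≠ 0)
    (hx : x ∉ P ^ m) (hu : u ∉ P) : x * u ∉ P ^ m := by
  have hradical : (P ^ m).radical = P := by
    rw [radical_pow P hm, IsPrime.radical inferInstance]
  have hprimary : (P ^ m).IsPrimary :=
    isPrimary_of_isMaximal_radical (by rwa [hradical])
  intro hxu
  rcases (isPrimary_iff.mp hprimary).2 hxu with h | h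
  · exact hx h
  · exact hu (hradical ▸ h)

theorem orderOf_mk_eq_of_cyclotomic_eval_mem (hΦ : (cyclotomic n R).eval a ∈ P)
    (hn : (n : R) ∉ P) : orderOf (Quotient.mk P a) = n := by
  have : NeZero (n : R ⧸ P) :=
    ⟨by rwa [← map_natCast (Quotient.mk P), Ne, Quotient.eq_zero_iff_mem]⟩
  refine (isRoot_cyclotomic_iff.mp ?_).eq_orderOf.symm
  rwa [IsRoot, ← map_cyclotomic n (Quotient.mk P), eval_map, eval₂_at_apply,
    Quotient.eq_zero_iff_mem]

theorem prod_properDivisors_cyclotomic_eval_notMem (hΦ : (cyclotomic n R).eval a ∈ P)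
    (hn : (n : R) ∉ P) : ∏ d ∈ n.properDivisors, (cyclotomic d R).eval a ∉ P := by
  intro h
  obtain ⟨d, hd, hΦd⟩ := IsPrime.prod_mem_iff.mp h
  obtain ⟨⟨c, rfl⟩, hdn⟩ := Nat.mem_properDivisors.mp hd
  have hd : (d : R) ∉ P := fun hdP ↦ hn (by rw [Nat.cast_mul]; exact P.mul_mem_right _ hdP)
  have := orderOf_mk_eq_of_cyclotomic_eval_mem hΦd hd
  rw [orderOf_mk_eq_of_cyclotomic_eval_mem hΦ hn] at this
  exact hdn.ne this.symm

theorem exists_pow_card_sub_one_sub_one_eq_cyclotomic_eval_mul [Finite (R ⧸ P)] (hn0 : 0 < n)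
    (hΦ : (cyclotomic n R).eval a ∈ P) (hn : (n : R) ∉ P) :
    ∃ u ∉ P, a ^ (Nat.card (R ⧸ P) - 1) - 1 = (cyclotomic n R).eval a * u := by
  let _ := Quotient.field P
  let _ := Fintype.ofFinite (R ⧸ P)
  have horder := orderOf_mk_eq_of_cyclotomic_eval_mem hΦ hn
  have hpow_n : Quotient.mk P a ^ n = 1 := horder ▸ pow_orderOf_eq_one _
  have hne : Quotient.mk P a ≠ 0 := fun h ↦ by
    rw [h, zero_pow hn0.ne'] at hpow_n
    exact zero_ne_one hpow_n
  have hpow_q : Quotient.mk P a ^ (Nat.card (R ⧸ P) - 1) = 1 := by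
    rw [Nat.card_eq_fintype_card]
    exact FiniteField.pow_card_sub_one_eq_one _ hne
  obtain ⟨k, hnk⟩ : n ∣ Nat.card (R ⧸ P) - 1 := horder ▸ orderOf_dvd_of_pow_eq_one hpow_q
  -- `n * k = q - 1 ≡ -1` modulo `P`
  have hkP : (k : R) ∉ P := by
    rw [← Quotient.eq_zero_iff_mem, map_natCast]
    intro hk0
    have hq : ((Nat.card (R ⧸ P) - 1 : ℕ) : R ⧸ P) = -1 := by
      rw [Nat.cast_sub Nat.card_pos, Nat.card_eq_fintype_card, FiniteField.cast_card_eq_zero,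
        Nat.cast_one, zero_sub]
    rw [hnk, Nat.cast_mul, hk0, mul_zero, zero_eq_neg] at hq
    exact one_ne_zero hq
  have han : a ^ n - 1 ∈ P := by
    rw [← Quotient.eq_zero_iff_mem, map_sub, map_pow, hpow_n, map_one, sub_self]
  refine ⟨(∏ d ∈ n.properDivisors, (cyclotomic d R).eval a) * ∑ i ∈ Finset.range k, (a ^ n) ^ i,
    fun h ↦ ?_, ?_⟩
  · rcases IsPrime.mem_or_mem inferInstance h with h | h
    · exact prod_properDivisors_cyclotomic_eval_notMem hΦ hn h
    · exact geom_sum_notMem_of_sub_one_mem han hkP h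
  · rw [hnk, pow_mul, ← geom_sum_mul, pow_sub_one_eq_cyclotomic_eval_mul_prod hn0]
    ring

end Ideal

theorem UniqueFactorizationMonoid.not_sq_dvd_of_count_normalizedFactors_eq_one {α : Type*}
    [CommMonoidWithZero α] [UniqueFactorizationMonoid α] [NormalizationMonoid α] [DecidableEq α]
    {p x : α} (h : (normalizedFactors x).count p = 1) : ¬p ^ 2 ∣ x := by
  have hp : p ∈ normalizedFactors x := Multiset.count_pos.mp (by omega)
  have hx : x ≠ 0 := by
    rintro rfl
    simp at hp
  rw [pow_dvd_iff_le_emultiplicity, emultiplicity_eq_count_normalizedFactors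
    (irreducible_of_normalized_factor p hp) hx, normalize_normalized_factor p hp, h]
  norm_num

section NumberField

open Ideal Polynomial

variable {K : Type*} [Field K] [NumberField K]

theorem isNonWieferich_of_cyclotomic_eval_mem {η : (𝓞 K)ˣ} {π : Ideal (𝓞 K)} [π.IsMaximal]
    {n : ℕ} (hn0 : 0 < n) (hΦ : (cyclotomic n (𝓞 K)).eval (η : 𝓞 K) ∈ π)
    (hΦ2 : (cyclotomic n (𝓞 K)).eval (η : 𝓞 K) ∉ π ^ 2) (hn : (n : 𝓞 K) ∉ π) :
    IsNonWieferich η π := by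
  have : Finite (𝓞 K ⧸ π) := finiteQuotientOfFreeOfNeBot π
    (Ring.ne_bot_of_isMaximal_of_not_isField ‹_› (RingOfIntegers.not_isField K))
  obtain ⟨u, hu, heq⟩ := exists_pow_card_sub_one_sub_one_eq_cyclotomic_eval_mul hn0 hΦ hn
  rw [IsNonWieferich, absNorm_apply, Submodule.cardQuot_apply, heq]
  exact ⟨π.mul_mem_right u hΦ, mul_notMem_pow two_ne_zero hΦ2 hu⟩

theorem exists_count_normalizedFactors_eq_one_not_dvd_of_not_squarefreePart_dvd
    {I J : Ideal (𝓞 K)} (h : ¬squarefreePart I ∣ J) :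
    ∃ π, (normalizedFactors I).count π = 1 ∧ ¬π ∣ J := by
  contrapose! h
  refine Finset.prod_primes_dvd _ (fun π hπ ↦ ?_) fun π hπ ↦ h π (Finset.mem_filter.mp hπ).2
  exact prime_of_normalized_factor π (Multiset.mem_toFinset.mp (Finset.mem_filter.mp hπ).1)

theorem exists_isMaximal_mem_notMem_sq_of_lt_absNorm_squarefreePart {b : 𝓞 K} {n : ℕ}
    (hn : 0 < n) (hlt : n ^ Module.finrank ℚ K < absNorm (squarefreePart (span {b}))) :
    ∃ π : Ideal (𝓞 K), π.IsMaximal ∧ b ∈ π ∧ b ∉ π ^ 2 ∧ (n : 𝓞 K) ∉ π := by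
  have hndvd : ¬squarefreePart (span {b}) ∣ span {(n : 𝓞 K)} := fun h ↦ hlt.not_ge <| by
    rw [← RingOfIntegers.rank K, ← absNorm_span_natCast]
    refine Nat.le_of_dvd ?_ (absNorm_dvd_absNorm_of_le (le_of_dvd h))
    rw [absNorm_span_natCast]
    exact pow_pos hn _
  obtain ⟨π, hcount, hπn⟩ :=
    exists_count_normalizedFactors_eq_one_not_dvd_of_not_squarefreePart_dvd hndvd
  have hmem : π ∈ normalizedFactors (span {b}) := Multiset.count_pos.mp (by omega)
  have hprime := prime_of_normalized_factor π hmem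
  refine ⟨π, (isPrime_of_prime hprime).isMaximal hprime.ne_zero,
    dvd_span_singleton.mp (dvd_of_mem_normalizedFactors hmem), fun h ↦ ?_,
    fun h ↦ hπn (dvd_span_singleton.mpr h)⟩
  exact not_sq_dvd_of_count_normalizedFactors_eq_one hcount (dvd_span_singleton.mpr h)

theorem exists_isNonWieferich_orderOf_eq (η : (𝓞 K)ˣ) {n : ℕ} (hn : 0 < n)
    (hlt : n ^ Module.finrank ℚ K <
      absNorm (squarefreePart (span {(cyclotomic n (𝓞 K)).eval (η : 𝓞 K)}))) :
    ∃ π : Ideal (𝓞 K), π.IsPrime ∧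
      (absNorm π : ℤ) ≤ |Algebra.norm ℤ ((cyclotomic n (𝓞 K)).eval (η : 𝓞 K))| ∧
      IsNonWieferich η π ∧ orderOf (Ideal.Quotient.mk π (η : 𝓞 K)) = n := by
  obtain ⟨π, hπ, hΦ, hΦ2, hnπ⟩ :=
    exists_isMaximal_mem_notMem_sq_of_lt_absNorm_squarefreePart hn hlt
  have hnorm : Algebra.norm ℤ ((cyclotomic n (𝓞 K)).eval (η : 𝓞 K)) ≠ 0 :=
    Algebra.norm_ne_zero_iff.mpr fun h ↦ hΦ2 (h ▸ zero_mem _)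
  refine ⟨π, hπ.isPrime, Int.le_of_dvd (abs_pos.mpr hnorm)
    ((dvd_abs _ _).mpr (absNorm_dvd_norm_of_mem hΦ)),
    isNonWieferich_of_cyclotomic_eval_mem hn hΦ hΦ2 hnπ,
    orderOf_mk_eq_of_cyclotomic_eval_mem hΦ hnπ⟩

end NumberField

theorem nonWieferich_count_ge_of_squarefreePart_general (K : Type*) [Field K] [NumberField K]
    (η : (𝓞 K)ˣ) (x : ℝ) :
    {n : ℕ | 1 ≤ n ∧
        (|Algebra.norm ℤ ((Polynomial.cyclotomic n (𝓞 K)).eval (η : 𝓞 K))| : ℝ) ≤ x ∧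
        n ^ Module.finrank ℚ K <
          Ideal.absNorm (squarefreePart
            (Ideal.span {(Polynomial.cyclotomic n (𝓞 K)).eval (η : 𝓞 K)}))}.ncard ≤
      {π : Ideal (𝓞 K) | π.IsPrime ∧ (Ideal.absNorm π : ℝ) ≤ x ∧ IsNonWieferich η π}.ncard := by
  set T := {π : Ideal (𝓞 K) | π.IsPrime ∧ (Ideal.absNorm π : ℝ) ≤ x ∧ IsNonWieferich η π}
  have hT : T.Finite :=
    (Ideal.finite_setOfPred_absNorm_le ⌊x⌋₊).subset fun π hπ ↦ Nat.le_floor hπ.2.1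
  calc _ ≤ ((fun π ↦ orderOf (Ideal.Quotient.mk π (η : 𝓞 K))) '' T).ncard := by
        refine Set.ncard_le_ncard ?_ (hT.image _)
        rintro n ⟨hn, hnorm, hlt⟩
        obtain ⟨π, hπ, hπnorm, hnw, horder⟩ := exists_isNonWieferich_orderOf_eq η hn hlt
        exact ⟨π, ⟨hπ, le_trans (by exact_mod_cast hπnorm) hnorm, hnw⟩, horder⟩
    _ ≤ T.ncard := Set.ncard_image_le hT

/-- Let `K` be a number field of degree `d` and `η` a unit of `𝓞 K` which is not a root of
unity.  Writing `U'ₙ` for the squarefree part of the ideal `(Φₙ(η))`, for every `x > 0` the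
number of non-Wieferich prime ideals of norm at most `x` with respect to `η` is at least the
number of integers `n ≥ 1` with `|N_{K/ℚ}(Φₙ(η))| ≤ x` and `N(U'ₙ) > n ^ d`. -/
theorem nonWieferich_count_ge_of_squarefreePart (K : Type*) [Field K] [NumberField K]
    (η : (𝓞 K)ˣ) (hη : ∀ m : ℕ, 0 < m → (η : 𝓞 K) ^ m ≠ 1) (x : ℝ) (hx : 0 < x) :
    {n : ℕ | 1 ≤ n ∧
        (|Algebra.norm ℤ ((Polynomial.cyclotomic n (𝓞 K)).eval (η : 𝓞 K))| : ℝ) ≤ x ∧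
        n ^ Module.finrank ℚ K <
          Ideal.absNorm (squarefreePart
            (Ideal.span {(Polynomial.cyclotomic n (𝓞 K)).eval (η : 𝓞 K)}))}.ncard ≤
      {π : Ideal (𝓞 K) | π.IsPrime ∧ (Ideal.absNorm π : ℝ) ≤ x ∧ IsNonWieferich η π}.ncard :=
  nonWieferich_count_ge_of_squarefreePart_general K η x
end
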